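/- arXiv:0706.0799 — 7 statements merged into one kernel-verified Lean document; each statement's English description precedes it below -/
import Mathlib

section
/- The transformation (x,y) ↦ (x₁,y₁) = (1/x, -x(xy+zw+α₁)), (z,w) ↦ (z₁,w₁) = (z/x, xw) is symplectic in the sense that dx∧dy + dz∧dw = dx₁∧dy₁ + dz₁∧dw₁ on the open set x ≠ 0. -/
/-! With X = 1/x, Y = -x(xy + zw + α₁), Z = z/x, W = xw one finds
dX∧dY = dx∧dy + (w dx∧dz + z dx∧dw)/x and dZ∧dW = dz∧dw - (w dx∧dz + z dx∧dw)/x,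
so the cross terms cancel. -/

/-- Directional derivative of a function on ℂ⁴. -/
noncomputable def Dv (f : ℂ × ℂ × ℂ × ℂ → ℂ) (p v : ℂ × ℂ × ℂ × ℂ) : ℂ :=
  fderiv ℂ f p v

/-- The standard symplectic form dx∧dy + dz∧dw evaluated on tangent vectors u, v. -/
def omega (u v : ℂ × ℂ × ℂ × ℂ) : ℂ :=
  (u.1 * v.2.1 - v.1 * u.2.1) + (u.2.2.1 * v.2.2.2 - v.2.2.1 * u.2.2.2)

/-- Pullback of dx∧dy + dz∧dw under (X,Y,Z,W), evaluated at p on u, v. -/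
noncomputable def pullback (X Y Z W : ℂ × ℂ × ℂ × ℂ → ℂ) (p u v : ℂ × ℂ × ℂ × ℂ) : ℂ :=
  (Dv X p u * Dv Y p v - Dv X p v * Dv Y p u)
    + (Dv Z p u * Dv W p v - Dv Z p v * Dv W p u)

section DvCalculus

variable {f g : ℂ × ℂ × ℂ × ℂ → ℂ} {p v : ℂ × ℂ × ℂ × ℂ}

theorem Dv_fst : Dv (fun q => q.1) p v = v.1 := by
  rw [Dv, (hasFDerivAt_id p).fst.fderiv]
  rfl

theorem Dv_snd_fst : Dv (fun q => q.2.1) p v = v.2.1 := by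
  rw [Dv, (hasFDerivAt_id p).snd.fst.fderiv]
  rfl

theorem Dv_snd_snd_fst : Dv (fun q => q.2.2.1) p v = v.2.2.1 := by
  rw [Dv, (hasFDerivAt_id p).snd.snd.fst.fderiv]
  rfl

theorem Dv_snd_snd_snd : Dv (fun q => q.2.2.2) p v = v.2.2.2 := by
  rw [Dv, (hasFDerivAt_id p).snd.snd.snd.fderiv]
  rfl

theorem Dv_const (c : ℂ) : Dv (fun _ => c) p v = 0 := by
  simp [Dv]

theorem Dv_neg : Dv (fun q => -f q) p v = -Dv f p v := by
  simp [Dv, fderiv_fun_neg]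

theorem Dv_add (hf : DifferentiableAt ℂ f p) (hg : DifferentiableAt ℂ g p) :
    Dv (fun q => f q + g q) p v = Dv f p v + Dv g p v := by
  simp [Dv, fderiv_fun_add hf hg]

theorem Dv_mul (hf : DifferentiableAt ℂ f p) (hg : DifferentiableAt ℂ g p) :
    Dv (fun q => f q * g q) p v = Dv f p v * g p + f p * Dv g p v := by
  simp only [Dv, fderiv_fun_mul hf hg, add_apply, smul_apply, smul_eq_mul]
  ring

theorem Dv_inv (hg : DifferentiableAt ℂ g p) (hg₀ : g p ≠ 0) :
    Dv (fun q => (g q)⁻¹) p v = -Dv g p v / g p ^ 2 := by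
  have h := (hasDerivAt_inv hg₀).comp_hasFDerivAt p hg.hasFDerivAt
  rw [Dv, show (fun q => (g q)⁻¹) = (fun y => y⁻¹) ∘ g from rfl, h.fderiv]
  simp only [smul_apply, smul_eq_mul, Dv]
  ring

theorem Dv_div (hf : DifferentiableAt ℂ f p) (hg : DifferentiableAt ℂ g p) (hg₀ : g p ≠ 0) :
    Dv (fun q => f q / g q) p v = (Dv f p v * g p - f p * Dv g p v) / g p ^ 2 := by
  simp only [div_eq_mul_inv]
  rw [Dv_mul (g := fun q => (g q)⁻¹) hf (hg.inv hg₀), Dv_inv hg hg₀]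
  field_simp
  ring

end DvCalculus

/-- The map (x,y,z,w) ↦ (1/x, -x(xy+zw+α₁), z/x, xw) is symplectic for x ≠ 0. -/
theorem symplectic_coord1 (α₁ : ℂ) (p : ℂ × ℂ × ℂ × ℂ) (hx : p.1 ≠ 0) :
    ∀ u v : ℂ × ℂ × ℂ × ℂ,
      pullback (fun q => 1 / q.1)
        (fun q => -q.1 * (q.1 * q.2.1 + q.2.2.1 * q.2.2.2 + α₁))
        (fun q => q.2.2.1 / q.1)
        (fun q => q.1 * q.2.2.2) p u v = omega u v := by
  intro u v
  simp (disch := first | fun_prop | exact hx) only [pullback, Dv_div, Dv_mul, Dv_neg, Dv_add,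
    Dv_const, Dv_fst, Dv_snd_fst, Dv_snd_snd_fst, Dv_snd_snd_snd]
  unfold omega
  field_simp
  ring
end

section
/- The transformation u₃: (x,y,z,w) ↦ (xD/D', yD'/D, zD/D', wD'/D), where D = xy+zw-α₁ and D' = xy+zw-α₁-α₃, is an involution after the parameter change (α₁,α₃) ↦ (α₁+α₃,-α₃): applying it twice (with parameters updated each time) gives the identity on the open set where D, D' ≠ 0. -/
/-- The transformation u₃ depending on parameters α₁, α₃. -/
noncomputable def u3 (α₁ α₃ : ℂ) (p : ℂ × ℂ × ℂ × ℂ) : ℂ × ℂ × ℂ × ℂ :=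
  let D := p.1 * p.2.1 + p.2.2.1 * p.2.2.2 - α₁
  let D' := p.1 * p.2.1 + p.2.2.1 * p.2.2.2 - α₁ - α₃
  (p.1 * D / D', p.2.1 * D' / D, p.2.2.1 * D / D', p.2.2.2 * D' / D)

/-!
Write `s = xy + zw`. The map u₃ is the torus action `(x, y, z, w) ↦ (cx, y/c, cz, w/c)` with
`c = D/D'`, which preserves `s`. Hence after one step the roles of `D = s - α₁` and
`D' = s - α₁ - α₃` are swapped by the parameter change, and the second step scales by `D'/D`,
undoing the first.
-/

section TorusAction

variable {K : Type*} [Field K]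

def quadForm (p : K × K × K × K) : K :=
  p.1 * p.2.1 + p.2.2.1 * p.2.2.2

def torusScale (c : K) (p : K × K × K × K) : K × K × K × K :=
  (p.1 * c, p.2.1 / c, p.2.2.1 * c, p.2.2.2 / c)

theorem quadForm_torusScale {c : K} (hc : c ≠ 0) (p : K × K × K × K) :
    quadForm (torusScale c p) = quadForm p := by
  simp only [quadForm, torusScale]
  field_simp

theorem torusScale_torusScale (c d : K) (p : K × K × K × K) :
    torusScale c (torusScale d p) = torusScale (d * c) p := by
  simp only [torusScale, mul_assoc, div_div]

@[simp]
theorem torusScale_one (p : K × K × K × K) : torusScale 1 p = p := by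
  simp [torusScale]

end TorusAction

theorem u3_eq_torusScale (α₁ α₃ : ℂ) (p : ℂ × ℂ × ℂ × ℂ) :
    u3 α₁ α₃ p = torusScale ((quadForm p - α₁) / (quadForm p - α₁ - α₃)) p := by
  simp only [u3, torusScale, quadForm, mul_div_assoc, div_div_eq_mul_div]

/-- u₃ together with the parameter change (α₁,α₃) ↦ (α₁+α₃, -α₃) is an involution
on the open set D ≠ 0, D' ≠ 0. -/
theorem u3_involutive (α₁ α₃ : ℂ) (p : ℂ × ℂ × ℂ × ℂ)
    (hD : p.1 * p.2.1 + p.2.2.1 * p.2.2.2 - α₁ ≠ 0)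
    (hD' : p.1 * p.2.1 + p.2.2.1 * p.2.2.2 - α₁ - α₃ ≠ 0) :
    u3 (α₁ + α₃) (-α₃) (u3 α₁ α₃ p) = p := by
  change quadForm p - α₁ ≠ 0 at hD
  change quadForm p - α₁ - α₃ ≠ 0 at hD'
  have hs : quadForm (u3 α₁ α₃ p) = quadForm p := by
    rw [u3_eq_torusScale]
    exact quadForm_torusScale (div_ne_zero hD hD') p
  rw [u3_eq_torusScale (α₁ + α₃), hs, u3_eq_torusScale, torusScale_torusScale,
    sub_add_eq_sub_sub, sub_neg_eq_add, sub_add_cancel, div_mul_div_cancel₀ hD', div_self hD,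
    torusScale_one]
end

section
/- The transformation u₃: (x,y,z,w) ↦ (xD/D', yD'/D, zD/D', wD'/D) with D = xy+zw-α₁, D' = xy+zw-α₁-α₃ preserves the products xy and zw, namely (xD/D')·(yD'/D) = xy and (zD/D')·(wD'/D) = zw, and it is symplectic: dX∧dY + dZ∧dW = dx∧dy + dz∧dw where (X,Y,Z,W) = u₃(x,y,z,w). -/
lemma Dv_gen (c c' : ℂ) (p v : ℂ × ℂ × ℂ × ℂ) (g : ℂ × ℂ × ℂ × ℂ → ℂ)
    (G : (ℂ × ℂ × ℂ × ℂ) →L[ℂ] ℂ) (hg : HasFDerivAt g G p)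
    (h' : p.1 * p.2.1 + p.2.2.1 * p.2.2.2 - c' ≠ 0) :
    Dv (fun q => g q * (q.1 * q.2.1 + q.2.2.1 * q.2.2.2 - c) /
        (q.1 * q.2.1 + q.2.2.1 * q.2.2.2 - c')) p v =
      ((G v * (p.1 * p.2.1 + p.2.2.1 * p.2.2.2 - c)
          + g p * (p.2.1 * v.1 + p.1 * v.2.1 + p.2.2.2 * v.2.2.1 + p.2.2.1 * v.2.2.2))
          * (p.1 * p.2.1 + p.2.2.1 * p.2.2.2 - c')
        - g p * (p.1 * p.2.1 + p.2.2.1 * p.2.2.2 - c)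
          * (p.2.1 * v.1 + p.1 * v.2.1 + p.2.2.2 * v.2.2.1 + p.2.2.1 * v.2.2.2))
        / (p.1 * p.2.1 + p.2.2.1 * p.2.2.2 - c') ^ 2 := by
  have h1 : HasFDerivAt (fun q : ℂ × ℂ × ℂ × ℂ => q.1)
      (ContinuousLinearMap.fst ℂ ℂ (ℂ × ℂ × ℂ)) p := hasFDerivAt_fst
  have h2 : HasFDerivAt (fun q : ℂ × ℂ × ℂ × ℂ => q.2.1)
      ((ContinuousLinearMap.fst ℂ ℂ (ℂ × ℂ)).comp (ContinuousLinearMap.snd ℂ ℂ (ℂ × ℂ × ℂ))) p :=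
    hasFDerivAt_fst.comp p hasFDerivAt_snd
  have h3 : HasFDerivAt (fun q : ℂ × ℂ × ℂ × ℂ => q.2.2.1)
      ((ContinuousLinearMap.fst ℂ ℂ ℂ).comp
        ((ContinuousLinearMap.snd ℂ ℂ (ℂ × ℂ)).comp (ContinuousLinearMap.snd ℂ ℂ (ℂ × ℂ × ℂ)))) p :=
    hasFDerivAt_fst.comp p (hasFDerivAt_snd.comp p hasFDerivAt_snd)
  have h4 : HasFDerivAt (fun q : ℂ × ℂ × ℂ × ℂ => q.2.2.2)
      ((ContinuousLinearMap.snd ℂ ℂ ℂ).comp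
        ((ContinuousLinearMap.snd ℂ ℂ (ℂ × ℂ)).comp (ContinuousLinearMap.snd ℂ ℂ (ℂ × ℂ × ℂ)))) p :=
    hasFDerivAt_snd.comp p (hasFDerivAt_snd.comp p hasFDerivAt_snd)
  have hEc : HasFDerivAt (fun q : ℂ × ℂ × ℂ × ℂ => q.1 * q.2.1 + q.2.2.1 * q.2.2.2 - c) _ p :=
    ((h1.mul h2).add (h3.mul h4)).sub_const c
  have hEc' : HasFDerivAt (fun q : ℂ × ℂ × ℂ × ℂ => q.1 * q.2.1 + q.2.2.1 * q.2.2.2 - c') _ p :=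
    ((h1.mul h2).add (h3.mul h4)).sub_const c'
  have hinv : HasFDerivAt
      (fun q : ℂ × ℂ × ℂ × ℂ => (q.1 * q.2.1 + q.2.2.1 * q.2.2.2 - c')⁻¹) _ p :=
    (hasFDerivAt_inv h').comp p hEc'
  have hmain := (hg.mul hEc).mul hinv
  have hfun : (fun q : ℂ × ℂ × ℂ × ℂ => g q * (q.1 * q.2.1 + q.2.2.1 * q.2.2.2 - c) /
        (q.1 * q.2.1 + q.2.2.1 * q.2.2.2 - c'))
      = fun q : ℂ × ℂ × ℂ × ℂ => g q * (q.1 * q.2.1 + q.2.2.1 * q.2.2.2 - c) *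
        (q.1 * q.2.1 + q.2.2.1 * q.2.2.2 - c')⁻¹ := by
    funext q; rw [div_eq_mul_inv]
  rw [Dv, hfun, HasFDerivAt.fderiv (f := fun q : ℂ × ℂ × ℂ × ℂ => g q * (q.1 * q.2.1 + q.2.2.1 * q.2.2.2 - c) *
        (q.1 * q.2.1 + q.2.2.1 * q.2.2.2 - c')⁻¹) hmain]
  simp only [ContinuousLinearMap.add_apply, ContinuousLinearMap.smul_apply,
    ContinuousLinearMap.comp_apply, ContinuousLinearMap.smulRight_apply,
    ContinuousLinearMap.coe_fst', ContinuousLinearMap.coe_snd',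
    ContinuousLinearMap.one_apply, smul_eq_mul, ContinuousLinearMap.neg_apply,
    ContinuousLinearMap.toSpanSingleton_apply, Pi.mul_apply]
  field_simp
  ring

lemma sympl_alg (D D' x y z w a b c d a' b' c' d' : ℂ) (hD : D ≠ 0) (hD' : D' ≠ 0) :
    (((a * D + x * (y * a + x * b + w * c + z * d)) * D'
        - x * D * (y * a + x * b + w * c + z * d)) / D' ^ 2)
      * (((b' * D' + y * (y * a' + x * b' + w * c' + z * d')) * D
        - y * D' * (y * a' + x * b' + w * c' + z * d')) / D ^ 2)
    - (((a' * D + x * (y * a' + x * b' + w * c' + z * d')) * D'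
        - x * D * (y * a' + x * b' + w * c' + z * d')) / D' ^ 2)
      * (((b * D' + y * (y * a + x * b + w * c + z * d)) * D
        - y * D' * (y * a + x * b + w * c + z * d)) / D ^ 2)
    + ((((c * D + z * (y * a + x * b + w * c + z * d)) * D'
        - z * D * (y * a + x * b + w * c + z * d)) / D' ^ 2)
      * (((d' * D' + w * (y * a' + x * b' + w * c' + z * d')) * D
        - w * D' * (y * a' + x * b' + w * c' + z * d')) / D ^ 2)
    - (((c' * D + z * (y * a' + x * b' + w * c' + z * d')) * D'
        - z * D * (y * a' + x * b' + w * c' + z * d')) / D' ^ 2)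
      * (((d * D' + w * (y * a + x * b + w * c + z * d)) * D
        - w * D' * (y * a + x * b + w * c + z * d)) / D ^ 2))
    = (a * b' - a' * b) + (c * d' - c' * d) := by
  field_simp
  ring
/-- u₃ preserves the products xy and zw, and is symplectic. -/
theorem u3_products_and_symplectic (α₁ α₃ : ℂ) (p : ℂ × ℂ × ℂ × ℂ)
    (hD : p.1 * p.2.1 + p.2.2.1 * p.2.2.2 - α₁ ≠ 0)
    (hD' : p.1 * p.2.1 + p.2.2.1 * p.2.2.2 - α₁ - α₃ ≠ 0) :
    (p.1 * (p.1 * p.2.1 + p.2.2.1 * p.2.2.2 - α₁) /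
        (p.1 * p.2.1 + p.2.2.1 * p.2.2.2 - α₁ - α₃)) *
      (p.2.1 * (p.1 * p.2.1 + p.2.2.1 * p.2.2.2 - α₁ - α₃) /
        (p.1 * p.2.1 + p.2.2.1 * p.2.2.2 - α₁)) = p.1 * p.2.1 ∧
    (p.2.2.1 * (p.1 * p.2.1 + p.2.2.1 * p.2.2.2 - α₁) /
        (p.1 * p.2.1 + p.2.2.1 * p.2.2.2 - α₁ - α₃)) *
      (p.2.2.2 * (p.1 * p.2.1 + p.2.2.1 * p.2.2.2 - α₁ - α₃) /
        (p.1 * p.2.1 + p.2.2.1 * p.2.2.2 - α₁)) = p.2.2.1 * p.2.2.2 ∧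
    (∀ u v : ℂ × ℂ × ℂ × ℂ,
      pullback
        (fun q => q.1 * (q.1 * q.2.1 + q.2.2.1 * q.2.2.2 - α₁) /
          (q.1 * q.2.1 + q.2.2.1 * q.2.2.2 - α₁ - α₃))
        (fun q => q.2.1 * (q.1 * q.2.1 + q.2.2.1 * q.2.2.2 - α₁ - α₃) /
          (q.1 * q.2.1 + q.2.2.1 * q.2.2.2 - α₁))
        (fun q => q.2.2.1 * (q.1 * q.2.1 + q.2.2.1 * q.2.2.2 - α₁) /
          (q.1 * q.2.1 + q.2.2.1 * q.2.2.2 - α₁ - α₃))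
        (fun q => q.2.2.2 * (q.1 * q.2.1 + q.2.2.1 * q.2.2.2 - α₁ - α₃) /
          (q.1 * q.2.1 + q.2.2.1 * q.2.2.2 - α₁)) p u v = omega u v) := by
  have hD'' : p.1 * p.2.1 + p.2.2.1 * p.2.2.2 - (α₁ + α₃) ≠ 0 := by
    rw [← sub_sub]; exact hD'
  refine ⟨by field_simp, by field_simp, ?_⟩
  intro u v
  unfold pullback omega
  simp only [sub_sub]
  have g1 : HasFDerivAt (fun q : ℂ × ℂ × ℂ × ℂ => q.1)
      (ContinuousLinearMap.fst ℂ ℂ (ℂ × ℂ × ℂ)) p := hasFDerivAt_fst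
  have g2 : HasFDerivAt (fun q : ℂ × ℂ × ℂ × ℂ => q.2.1)
      ((ContinuousLinearMap.fst ℂ ℂ (ℂ × ℂ)).comp (ContinuousLinearMap.snd ℂ ℂ (ℂ × ℂ × ℂ))) p :=
    hasFDerivAt_fst.comp p hasFDerivAt_snd
  have g3 : HasFDerivAt (fun q : ℂ × ℂ × ℂ × ℂ => q.2.2.1)
      ((ContinuousLinearMap.fst ℂ ℂ ℂ).comp
        ((ContinuousLinearMap.snd ℂ ℂ (ℂ × ℂ)).comp (ContinuousLinearMap.snd ℂ ℂ (ℂ × ℂ × ℂ)))) p :=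
    hasFDerivAt_fst.comp p (hasFDerivAt_snd.comp p hasFDerivAt_snd)
  have g4 : HasFDerivAt (fun q : ℂ × ℂ × ℂ × ℂ => q.2.2.2)
      ((ContinuousLinearMap.snd ℂ ℂ ℂ).comp
        ((ContinuousLinearMap.snd ℂ ℂ (ℂ × ℂ)).comp (ContinuousLinearMap.snd ℂ ℂ (ℂ × ℂ × ℂ)))) p :=
    hasFDerivAt_snd.comp p (hasFDerivAt_snd.comp p hasFDerivAt_snd)
  rw [Dv_gen α₁ (α₁ + α₃) p u _ _ g1 hD'', Dv_gen α₁ (α₁ + α₃) p v _ _ g1 hD'',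
    Dv_gen (α₁ + α₃) α₁ p u _ _ g2 hD, Dv_gen (α₁ + α₃) α₁ p v _ _ g2 hD,
    Dv_gen α₁ (α₁ + α₃) p u _ _ g3 hD'', Dv_gen α₁ (α₁ + α₃) p v _ _ g3 hD'',
    Dv_gen (α₁ + α₃) α₁ p u _ _ g4 hD, Dv_gen (α₁ + α₃) α₁ p v _ _ g4 hD]
  simp only [ContinuousLinearMap.comp_apply, ContinuousLinearMap.coe_fst',
    ContinuousLinearMap.coe_snd']
  exact sympl_alg (p.1 * p.2.1 + p.2.2.1 * p.2.2.2 - α₁)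
    (p.1 * p.2.1 + p.2.2.1 * p.2.2.2 - (α₁ + α₃)) p.1 p.2.1 p.2.2.1 p.2.2.2
    u.1 u.2.1 u.2.2.1 u.2.2.2 v.1 v.2.1 v.2.2.1 v.2.2.2 hD hD''
end

section
/- The two autonomous Hamiltonians K₁ = -q₁²p₁ + p₁²/2 - α₂q₁ - q₂²p₂ + p₂²/2 - α₀q₂ + p₁p₂ and K₂ = q₁²p₁p₂ + q₂²p₁p₂ - 2q₁p₁q₂p₂ - α₀q₁p₁ - α₂q₂p₂ + α₀p₁q₂ + α₂q₁p₂ Poisson commute: {K₁,K₂} = 0. -/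
/-- K₁ of the autonomous degenerate Garnier system; coordinates (q₁,p₁,q₂,p₂). -/
noncomputable def K1 (α₀ α₂ : ℂ) (q : ℂ × ℂ × ℂ × ℂ) : ℂ :=
  -q.1 ^ 2 * q.2.1 + q.2.1 ^ 2 / 2 - α₂ * q.1
    - q.2.2.1 ^ 2 * q.2.2.2 + q.2.2.2 ^ 2 / 2 - α₀ * q.2.2.1 + q.2.1 * q.2.2.2

/-- K₂ of the autonomous degenerate Garnier system. -/
noncomputable def K2 (α₀ α₂ : ℂ) (q : ℂ × ℂ × ℂ × ℂ) : ℂ :=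
  q.1 ^ 2 * q.2.1 * q.2.2.2 + q.2.2.1 ^ 2 * q.2.1 * q.2.2.2
    - 2 * q.1 * q.2.1 * q.2.2.1 * q.2.2.2 - α₀ * q.1 * q.2.1 - α₂ * q.2.2.1 * q.2.2.2
    + α₀ * q.2.1 * q.2.2.1 + α₂ * q.1 * q.2.2.2

/-- Partial derivatives in the directions q₁, p₁, q₂, p₂. -/
noncomputable def pq1 (f : ℂ × ℂ × ℂ × ℂ → ℂ) (p : ℂ × ℂ × ℂ × ℂ) : ℂ :=
  fderiv ℂ f p (1, 0, 0, 0)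
noncomputable def pp1 (f : ℂ × ℂ × ℂ × ℂ → ℂ) (p : ℂ × ℂ × ℂ × ℂ) : ℂ :=
  fderiv ℂ f p (0, 1, 0, 0)
noncomputable def pq2 (f : ℂ × ℂ × ℂ × ℂ → ℂ) (p : ℂ × ℂ × ℂ × ℂ) : ℂ :=
  fderiv ℂ f p (0, 0, 1, 0)
noncomputable def pp2 (f : ℂ × ℂ × ℂ × ℂ → ℂ) (p : ℂ × ℂ × ℂ × ℂ) : ℂ :=
  fderiv ℂ f p (0, 0, 0, 1)

/-- The Poisson bracket {F,G}. -/
noncomputable def pbracket (F G : ℂ × ℂ × ℂ × ℂ → ℂ) (p : ℂ × ℂ × ℂ × ℂ) : ℂ :=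
  pp1 F p * pq1 G p - pq1 F p * pp1 G p + pp2 F p * pq2 G p - pq2 F p * pp2 G p

theorem differentiable_K1 (α₀ α₂ : ℂ) : Differentiable ℂ (K1 α₀ α₂) := by
  unfold K1; fun_prop

theorem differentiable_K2 (α₀ α₂ : ℂ) : Differentiable ℂ (K2 α₀ α₂) := by
  unfold K2; fun_prop

theorem K1_partials (α₀ α₂ q₁ p₁ q₂ p₂ : ℂ) :
    pq1 (K1 α₀ α₂) (q₁, p₁, q₂, p₂) = -2 * q₁ * p₁ - α₂ ∧
    pp1 (K1 α₀ α₂) (q₁, p₁, q₂, p₂) = -q₁ ^ 2 + p₁ + p₂ ∧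
    pq2 (K1 α₀ α₂) (q₁, p₁, q₂, p₂) = -2 * q₂ * p₂ - α₀ ∧
    pp2 (K1 α₀ α₂) (q₁, p₁, q₂, p₂) = -q₂ ^ 2 + p₂ + p₁ := by
  simp only [pq1, pp1, pq2, pp2, ← (differentiable_K1 α₀ α₂ _).lineDeriv_eq_fderiv, lineDeriv]
  refine ⟨?_, ?_, ?_, ?_⟩ <;> simp (disch := fun_prop) [K1] <;> ring

theorem K2_partials (α₀ α₂ q₁ p₁ q₂ p₂ : ℂ) :
    pq1 (K2 α₀ α₂) (q₁, p₁, q₂, p₂) = 2 * q₁ * p₁ * p₂ - 2 * p₁ * q₂ * p₂ - α₀ * p₁ + α₂ * p₂ ∧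
    pp1 (K2 α₀ α₂) (q₁, p₁, q₂, p₂) = (q₁ - q₂) ^ 2 * p₂ - α₀ * q₁ + α₀ * q₂ ∧
    pq2 (K2 α₀ α₂) (q₁, p₁, q₂, p₂) = 2 * q₂ * p₁ * p₂ - 2 * q₁ * p₁ * p₂ - α₂ * p₂ + α₀ * p₁ ∧
    pp2 (K2 α₀ α₂) (q₁, p₁, q₂, p₂) = (q₁ - q₂) ^ 2 * p₁ - α₂ * q₂ + α₂ * q₁ := by
  simp only [pq1, pp1, pq2, pp2, ← (differentiable_K2 α₀ α₂ _).lineDeriv_eq_fderiv, lineDeriv]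
  refine ⟨?_, ?_, ?_, ?_⟩ <;> simp (disch := fun_prop) [K2] <;> ring

/-- K₁ and K₂ Poisson commute. -/
theorem K1_K2_commute (α₀ α₂ : ℂ) (p : ℂ × ℂ × ℂ × ℂ) :
    pbracket (K1 α₀ α₂) (K2 α₀ α₂) p = 0 := by
  obtain ⟨q₁, p₁, q₂, p₂⟩ := p
  obtain ⟨hq₁, hp₁, hq₂, hp₂⟩ := K1_partials α₀ α₂ q₁ p₁ q₂ p₂
  obtain ⟨gq₁, gp₁, gq₂, gp₂⟩ := K2_partials α₀ α₂ q₁ p₁ q₂ p₂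
  rw [pbracket, hq₁, hp₁, hq₂, hp₂, gq₁, gp₁, gq₂, gp₂]
  ring
end

section
/- Under the birational transformation x = q₁, y = p₁+p₂-q₁², z = 2q₁³-2q₁p₂+2q₂p₂+α₀+α₂, w = -6q₁⁴+8q₁²p₂+6q₁²p₁+2q₂²p₂-4q₁q₂p₂-2α₀(q₁-q₂), the Hamiltonian flow of K₁ satisfies dx/dt = y, dy/dt = z, dz/dt = w along solutions of the system dq_i/dt = ∂K₁/∂p_i, dp_i/dt = -∂K₁/∂q_i. -/
/-- The derivative of F along the Hamiltonian flow of K₁. -/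
noncomputable def flowD (α₀ α₂ : ℂ) (F : ℂ × ℂ × ℂ × ℂ → ℂ) (p : ℂ × ℂ × ℂ × ℂ) : ℂ :=
  pq1 F p * pp1 (K1 α₀ α₂) p - pp1 F p * pq1 (K1 α₀ α₂) p
    + pq2 F p * pp2 (K1 α₀ α₂) p - pp2 F p * pq2 (K1 α₀ α₂) p

lemma fderiv_apply_eq_partials (f : ℂ × ℂ × ℂ × ℂ → ℂ) (p v : ℂ × ℂ × ℂ × ℂ) :
    fderiv ℂ f p v =
      v.1 * pq1 f p + v.2.1 * pp1 f p + v.2.2.1 * pq2 f p + v.2.2.2 * pp2 f p := by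
  have hv : v = v.1 • ((1, 0, 0, 0) : ℂ × ℂ × ℂ × ℂ) + v.2.1 • (0, 1, 0, 0)
      + v.2.2.1 • (0, 0, 1, 0) + v.2.2.2 • (0, 0, 0, 1) := by
    ext <;> simp
  conv_lhs => rw [hv]
  simp only [map_add, map_smul, smul_eq_mul, pq1, pp1, pq2, pp2]

/-- The right-hand side of Hamilton's equations for `K1`, in the coordinates `(q₁, p₁, q₂, p₂)`. -/
def vectorFieldK1 (α₀ α₂ : ℂ) (q : ℂ × ℂ × ℂ × ℂ) : ℂ × ℂ × ℂ × ℂ :=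
  (q.2.1 + q.2.2.2 - q.1 ^ 2, 2 * q.1 * q.2.1 + α₂,
    q.2.2.2 + q.2.1 - q.2.2.1 ^ 2, 2 * q.2.2.1 * q.2.2.2 + α₀)

lemma partials_K1 (α₀ α₂ : ℂ) (p : ℂ × ℂ × ℂ × ℂ) :
    pq1 (K1 α₀ α₂) p = -2 * p.1 * p.2.1 - α₂ ∧
    pp1 (K1 α₀ α₂) p = p.2.1 + p.2.2.2 - p.1 ^ 2 ∧
    pq2 (K1 α₀ α₂) p = -2 * p.2.2.1 * p.2.2.2 - α₀ ∧
    pp2 (K1 α₀ α₂) p = p.2.2.2 + p.2.1 - p.2.2.1 ^ 2 := by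
  unfold pq1 pp1 pq2 pp2 K1
  refine ⟨?_, ?_, ?_, ?_⟩ <;>
    simp (disch := fun_prop) [fderiv_fun_sub, fderiv_fun_add, fderiv_fun_pow, fderiv_fun_mul,
      div_eq_mul_inv, fderiv.fst, fderiv.snd] <;>
    ring

lemma flowD_eq_fderiv_vectorFieldK1 (α₀ α₂ : ℂ) (F : ℂ × ℂ × ℂ × ℂ → ℂ) (p : ℂ × ℂ × ℂ × ℂ) :
    flowD α₀ α₂ F p = fderiv ℂ F p (vectorFieldK1 α₀ α₂ p) := by
  obtain ⟨hq₁, hp₁, hq₂, hp₂⟩ := partials_K1 α₀ α₂ p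
  rw [fderiv_apply_eq_partials, flowD, hq₁, hp₁, hq₂, hp₂, vectorFieldK1]
  ring

theorem flow_of_K1_general (α₀ α₂ : ℂ) (p : ℂ × ℂ × ℂ × ℂ) :
    (flowD α₀ α₂ (fun q => q.1) p = (fun q : ℂ × ℂ × ℂ × ℂ =>
        q.2.1 + q.2.2.2 - q.1 ^ 2) p) ∧
    (flowD α₀ α₂ (fun q => q.2.1 + q.2.2.2 - q.1 ^ 2) p = (fun q : ℂ × ℂ × ℂ × ℂ =>
        2 * q.1 ^ 3 - 2 * q.1 * q.2.2.2 + 2 * q.2.2.1 * q.2.2.2 + α₀ + α₂) p) ∧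
    (flowD α₀ α₂ (fun q =>
        2 * q.1 ^ 3 - 2 * q.1 * q.2.2.2 + 2 * q.2.2.1 * q.2.2.2 + α₀ + α₂) p
      = (fun q : ℂ × ℂ × ℂ × ℂ =>
        -6 * q.1 ^ 4 + 8 * q.1 ^ 2 * q.2.2.2 + 6 * q.1 ^ 2 * q.2.1
          + 2 * q.2.2.1 ^ 2 * q.2.2.2 - 4 * q.1 * q.2.2.1 * q.2.2.2
          - 2 * α₀ * (q.1 - q.2.2.1)) p) := by
  simp only [flowD_eq_fderiv_vectorFieldK1, vectorFieldK1]
  refine ⟨?_, ?_, ?_⟩ <;>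
    simp (disch := fun_prop) [fderiv_fun_sub, fderiv_fun_add, fderiv_fun_pow, fderiv_fun_mul,
      fderiv.fst, fderiv.snd] <;>
    ring

/-- Under the birational transformation x = q₁, y = p₁+p₂-q₁², etc., the flow of K₁
satisfies dx/dt = y, dy/dt = z, dz/dt = w. -/
theorem flow_of_K1 (α₀ α₁ α₂ : ℂ) (hsum : α₀ + α₁ + α₂ = 0) (p : ℂ × ℂ × ℂ × ℂ) :
    (flowD α₀ α₂ (fun q => q.1) p = (fun q : ℂ × ℂ × ℂ × ℂ =>
        q.2.1 + q.2.2.2 - q.1 ^ 2) p) ∧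
    (flowD α₀ α₂ (fun q => q.2.1 + q.2.2.2 - q.1 ^ 2) p = (fun q : ℂ × ℂ × ℂ × ℂ =>
        2 * q.1 ^ 3 - 2 * q.1 * q.2.2.2 + 2 * q.2.2.1 * q.2.2.2 + α₀ + α₂) p) ∧
    (flowD α₀ α₂ (fun q =>
        2 * q.1 ^ 3 - 2 * q.1 * q.2.2.2 + 2 * q.2.2.1 * q.2.2.2 + α₀ + α₂) p
      = (fun q : ℂ × ℂ × ℂ × ℂ =>
        -6 * q.1 ^ 4 + 8 * q.1 ^ 2 * q.2.2.2 + 6 * q.1 ^ 2 * q.2.1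
          + 2 * q.2.2.1 ^ 2 * q.2.2.2 - 4 * q.1 * q.2.2.1 * q.2.2.2
          - 2 * α₀ * (q.1 - q.2.2.1)) p) :=
  flow_of_K1_general α₀ α₂ p
end

section
/- The transformation π₃ of the symmetric P_IV-type system, (x,y,z,w) ↦ (2i(xy+zw-α₁)/x, ix(xy+α₂)/(2(xy+zw-α₁)), 2i(xy+zw-α₁)/z, iz(zw+α₃)/(2(xy+zw-α₁))), with t ↦ -it, s ↦ -is, is symplectic: it preserves dx∧dy + dz∧dw on the open set x,z ≠ 0 and xy+zw-α₁ ≠ 0. -/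
/-
Since `XY = -(xy + α₂)` and `ZW = -(zw + α₃)`, write `dX ∧ dY = (dX / X) ∧ d(XY)` with
`dX / X = dH / H - dx / x`, where `H = xy + zw - α₁`. This gives
`dX ∧ dY = dx ∧ dy - dH ∧ d(xy) / H` and likewise `dZ ∧ dW = dz ∧ dw - dH ∧ d(zw) / H`;
the two correction terms add up to `-dH ∧ dH / H = 0`.
-/

open Complex

open Filter Topology

section FderivWedge

variable {𝕜 E : Type*} [NontriviallyNormedField 𝕜] [NormedAddCommGroup E] [NormedSpace 𝕜 E]

noncomputable def fderivWedge (f g : E → 𝕜) (p u v : E) : 𝕜 :=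
  fderiv 𝕜 f p u * fderiv 𝕜 g p v - fderiv 𝕜 f p v * fderiv 𝕜 g p u

variable {f g h H x y z w Y W : E → 𝕜} {p u v : E}

theorem fderivWedge_continuousLinearMap (L M : E →L[𝕜] 𝕜) (p u v : E) :
    fderivWedge L M p u v = L u * M v - L v * M u := by
  simp only [fderivWedge, ContinuousLinearMap.fderiv]

theorem fderivWedge_self : fderivWedge f f p u v = 0 := by
  unfold fderivWedge; ring

theorem fderivWedge_mul_left (hf : DifferentiableAt 𝕜 f p) (hg : DifferentiableAt 𝕜 g p) :
    fderivWedge (fun q => f q * g q) h p u v =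
      f p * fderivWedge g h p u v + g p * fderivWedge f h p u v := by
  simp only [fderivWedge, fderiv_fun_mul hf hg, add_apply, smul_apply, smul_eq_mul]
  ring

theorem fderivWedge_mul_right (hg : DifferentiableAt 𝕜 g p) (hh : DifferentiableAt 𝕜 h p) :
    fderivWedge f (fun q => g q * h q) p u v =
      g p * fderivWedge f h p u v + h p * fderivWedge f g p u v := by
  simp only [fderivWedge, fderiv_fun_mul hg hh, add_apply, smul_apply, smul_eq_mul]
  ring

theorem fderivWedge_add_right (hg : DifferentiableAt 𝕜 g p) (hh : DifferentiableAt 𝕜 h p) :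
    fderivWedge f (fun q => g q + h q) p u v = fderivWedge f g p u v + fderivWedge f h p u v := by
  simp only [fderivWedge, fderiv_fun_add hg hh, add_apply]
  ring

theorem fderivWedge_const_mul_left (hf : DifferentiableAt 𝕜 f p) (a : 𝕜) :
    fderivWedge (fun q => a * f q) g p u v = a * fderivWedge f g p u v := by
  simp only [fderivWedge, fderiv_const_mul hf, smul_apply, smul_eq_mul]
  ring

theorem fderivWedge_const_mul_right (hg : DifferentiableAt 𝕜 g p) (a : 𝕜) :
    fderivWedge f (fun q => a * g q) p u v = a * fderivWedge f g p u v := by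
  simp only [fderivWedge, fderiv_const_mul hg, smul_apply, smul_eq_mul]
  ring

theorem fderivWedge_sub_const_right (c : 𝕜) :
    fderivWedge f (fun q => g q - c) p u v = fderivWedge f g p u v := by
  simp only [fderivWedge, fderiv_sub_const]

theorem Filter.EventuallyEq.fderivWedge_left (hfg : f =ᶠ[𝓝 p] g) :
    fderivWedge f h p u v = fderivWedge g h p u v := by
  simp only [fderivWedge, hfg.fderiv_eq]

theorem Filter.EventuallyEq.fderivWedge_right (hgh : g =ᶠ[𝓝 p] h) :
    fderivWedge f g p u v = fderivWedge f h p u v := by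
  simp only [fderivWedge, hgh.fderiv_eq]

theorem fderivWedge_eq_div_of_mul_eventuallyEq {Q : E → 𝕜} (hf : DifferentiableAt 𝕜 f p)
    (hg : DifferentiableAt 𝕜 g p) (hf0 : f p ≠ 0) (hQ : (fun q => f q * g q) =ᶠ[𝓝 p] Q) :
    fderivWedge f g p u v = fderivWedge f Q p u v / f p := by
  rw [eq_div_iff hf0, ← hQ.fderivWedge_right, fderivWedge_mul_right hf hg, fderivWedge_self]
  ring

theorem fderivWedge_const_mul_div_left (hf : DifferentiableAt 𝕜 f p)
    (hg : DifferentiableAt 𝕜 g p) (hg0 : g p ≠ 0) (c : 𝕜) :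
    fderivWedge (fun q => c * f q / g q) h p u v =
      (c * fderivWedge f h p u v - c * f p / g p * fderivWedge g h p u v) / g p := by
  have hquot : DifferentiableAt 𝕜 (fun q => c * f q / g q) p := by
    simp only [div_eq_mul_inv]; fun_prop (disch := assumption)
  have hmul : (fun q => c * f q / g q * g q) =ᶠ[𝓝 p] fun q => c * f q := by
    filter_upwards [hg.continuousAt.eventually_ne hg0] with q hq
    field_simp
  rw [eq_div_iff hg0]
  have hleibniz := fderivWedge_mul_left (h := h) (u := u) (v := v) hquot hg
  rw [hmul.fderivWedge_left, fderivWedge_const_mul_left hf] at hleibniz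
  linear_combination -hleibniz

theorem fderivWedge_const_mul_div_of_mul_eventuallyEq {c a b : 𝕜}
    (hH : DifferentiableAt 𝕜 H p) (hx : DifferentiableAt 𝕜 x p) (hy : DifferentiableAt 𝕜 y p)
    (hY : DifferentiableAt 𝕜 Y p) (hc : c ≠ 0) (hH0 : H p ≠ 0) (hx0 : x p ≠ 0)
    (hXY : (fun q => c * H q / x q * Y q) =ᶠ[𝓝 p] fun q => a * (x q * y q) - b) :
    fderivWedge (fun q => c * H q / x q) Y p u v =
      a * (fderivWedge H (fun q => x q * y q) p u v / H p - fderivWedge x y p u v) := by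
  have hX : DifferentiableAt 𝕜 (fun q => c * H q / x q) p := by
    simp only [div_eq_mul_inv]; fun_prop (disch := assumption)
  have hX0 : c * H p / x p ≠ 0 := by positivity
  rw [fderivWedge_eq_div_of_mul_eventuallyEq hX hY hX0 hXY, fderivWedge_sub_const_right,
    fderivWedge_const_mul_right (by fun_prop), fderivWedge_const_mul_div_left hH hx hx0,
    fderivWedge_mul_right (f := x) hx hy, fderivWedge_self]
  field_simp
  ring

theorem fderivWedge_add_fderivWedge_of_mul_eventuallyEq {c c' a b b' α : 𝕜}
    (hx : DifferentiableAt 𝕜 x p) (hy : DifferentiableAt 𝕜 y p) (hz : DifferentiableAt 𝕜 z p)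
    (hw : DifferentiableAt 𝕜 w p) (hY : DifferentiableAt 𝕜 Y p) (hW : DifferentiableAt 𝕜 W p)
    (hc : c ≠ 0) (hc' : c' ≠ 0) (hx0 : x p ≠ 0) (hz0 : z p ≠ 0)
    (hH0 : x p * y p + z p * w p - α ≠ 0)
    (hXY : (fun q => c * (x q * y q + z q * w q - α) / x q * Y q) =ᶠ[𝓝 p]
      fun q => a * (x q * y q) - b)
    (hZW : (fun q => c' * (x q * y q + z q * w q - α) / z q * W q) =ᶠ[𝓝 p]
      fun q => a * (z q * w q) - b') :
    fderivWedge (fun q => c * (x q * y q + z q * w q - α) / x q) Y p u v +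
        fderivWedge (fun q => c' * (x q * y q + z q * w q - α) / z q) W p u v =
      -a * (fderivWedge x y p u v + fderivWedge z w p u v) := by
  have hH : DifferentiableAt 𝕜 (fun q => x q * y q + z q * w q - α) p := by fun_prop
  have hHH : fderivWedge (fun q => x q * y q + z q * w q - α) (fun q => x q * y q) p u v +
      fderivWedge (fun q => x q * y q + z q * w q - α) (fun q => z q * w q) p u v = 0 := by
    rw [← fderivWedge_add_right (by fun_prop) (by fun_prop), ← fderivWedge_sub_const_right α,
      fderivWedge_self]
  rw [fderivWedge_const_mul_div_of_mul_eventuallyEq hH hx hy hY hc hH0 hx0 hXY,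
    fderivWedge_const_mul_div_of_mul_eventuallyEq hH hz hw hW hc' hH0 hz0 hZW]
  linear_combination a / (x p * y p + z p * w p - α) * hHH

end FderivWedge

theorem two_mul_I_mul_div_mul_eventuallyEq {E : Type*} [TopologicalSpace E] {f g Q : E → ℂ}
    {p : E} (hf : ContinuousAt f p) (hg : ContinuousAt g p) (hf0 : f p ≠ 0) (hg0 : g p ≠ 0)
    (b : ℂ) :
    (fun q => 2 * I * f q / g q * (I * g q * (Q q + b) / (2 * f q))) =ᶠ[𝓝 p]
      fun q => -1 * Q q - b := by
  filter_upwards [hf.eventually_ne hf0, hg.eventually_ne hg0] with q hfq hgq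
  field_simp
  rw [I_sq]
  ring

open ContinuousLinearMap in
theorem omega_eq_fderivWedge (p u v : ℂ × ℂ × ℂ × ℂ) :
    omega u v = fderivWedge (·.1) (·.2.1) p u v + fderivWedge (·.2.2.1) (·.2.2.2) p u v :=
  (congrArg₂ (· + ·) (fderivWedge_continuousLinearMap (fst ℂ ℂ _) (fst ℂ ℂ _ ∘L snd ℂ ℂ _) p u v)
    (fderivWedge_continuousLinearMap (fst ℂ ℂ ℂ ∘L snd ℂ ℂ _ ∘L snd ℂ ℂ _)
      (snd ℂ ℂ ℂ ∘L snd ℂ ℂ _ ∘L snd ℂ ℂ _) p u v)).symm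

/-- The transformation π₃ of the symmetric P_IV-type system is symplectic on the
open set x ≠ 0, z ≠ 0, xy + zw - α₁ ≠ 0. -/
theorem pi3_symplectic (α₁ α₂ α₃ : ℂ) (p : ℂ × ℂ × ℂ × ℂ)
    (hx : p.1 ≠ 0) (hz : p.2.2.1 ≠ 0)
    (hD : p.1 * p.2.1 + p.2.2.1 * p.2.2.2 - α₁ ≠ 0) :
    ∀ u v : ℂ × ℂ × ℂ × ℂ,
      pullback
        (fun q => 2 * I * (q.1 * q.2.1 + q.2.2.1 * q.2.2.2 - α₁) / q.1)
        (fun q => I * q.1 * (q.1 * q.2.1 + α₂) /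
          (2 * (q.1 * q.2.1 + q.2.2.1 * q.2.2.2 - α₁)))
        (fun q => 2 * I * (q.1 * q.2.1 + q.2.2.1 * q.2.2.2 - α₁) / q.2.2.1)
        (fun q => I * q.2.2.1 * (q.2.2.1 * q.2.2.2 + α₃) /
          (2 * (q.1 * q.2.1 + q.2.2.1 * q.2.2.2 - α₁))) p u v = omega u v := by
  intro u v
  let H : ℂ × ℂ × ℂ × ℂ → ℂ := fun q => q.1 * q.2.1 + q.2.2.1 * q.2.2.2 - α₁
  have h2I : (2 : ℂ) * I ≠ 0 := mul_ne_zero two_ne_zero I_ne_zero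
  have h2D : 2 * (p.1 * p.2.1 + p.2.2.1 * p.2.2.2 - α₁) ≠ 0 := mul_ne_zero two_ne_zero hD
  have key := fderivWedge_add_fderivWedge_of_mul_eventuallyEq (u := u) (v := v)
    (x := (·.1)) (y := (·.2.1)) (z := (·.2.2.1)) (w := (·.2.2.2)) (c := 2 * I) (c' := 2 * I)
    (a := -1) (b := α₂) (b' := α₃) (α := α₁)
    (Y := fun q => I * q.1 * (q.1 * q.2.1 + α₂) / (2 * H q))
    (W := fun q => I * q.2.2.1 * (q.2.2.1 * q.2.2.2 + α₃) / (2 * H q))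
    (by fun_prop) (by fun_prop) (by fun_prop) (by fun_prop)
    (by simp only [div_eq_mul_inv]; fun_prop (disch := exact h2D))
    (by simp only [div_eq_mul_inv]; fun_prop (disch := exact h2D))
    h2I h2I hx hz hD
    (two_mul_I_mul_div_mul_eventuallyEq (f := H) (g := (·.1)) (Q := fun q => q.1 * q.2.1)
      (by fun_prop) (by fun_prop) hD hx α₂)
    (two_mul_I_mul_div_mul_eventuallyEq (f := H) (g := (·.2.2.1))
      (Q := fun q => q.2.2.1 * q.2.2.2) (by fun_prop) (by fun_prop) hD hz α₃)
  rw [neg_neg, one_mul, ← omega_eq_fderivWedge p] at key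
  exact key
end

section
/- The transformation π₂ of the P_III-type symmetric system, (x,y,z,w) ↦ (t/x, -(xy+α₀)x/t, s/z, -(zw+α₂)z/s), is symplectic (preserves dx∧dy + dz∧dw with t,s held fixed) and is an involution up to the parameter change (α₁,α₃) ↦ (α₁+α₃-1/2, 1-α₃): applying the variable transformation twice returns the identity on x,y,z,w. -/
/-- The transformation π₂ of the P_III-type system in the phase variables. -/
noncomputable def pi2 (α₀ α₂ t s : ℂ) (p : ℂ × ℂ × ℂ × ℂ) : ℂ × ℂ × ℂ × ℂ :=
  (t / p.1, -(p.1 * p.2.1 + α₀) * p.1 / t,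
   s / p.2.2.1, -(p.2.2.1 * p.2.2.2 + α₂) * p.2.2.1 / s)

variable {𝕜 E : Type*} [NontriviallyNormedField 𝕜] [NormedAddCommGroup E] [NormedSpace 𝕜 E]
  {f g : E → 𝕜} {f' g' : E →L[𝕜] 𝕜} {p : E}

theorem HasFDerivAt.const_div (c : 𝕜) (hf : HasFDerivAt f f' p) (hp : f p ≠ 0) :
    HasFDerivAt (fun q => c / f q) ((-c / f p ^ 2) • f') p := by
  have h := ((hasDerivAt_inv hp).const_mul c).comp_hasFDerivAt p hf
  simpa [div_eq_mul_inv, Function.comp_def, neg_div, mul_neg] using h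

theorem HasFDerivAt.div_const (hf : HasFDerivAt f f' p) (c : 𝕜) :
    HasFDerivAt (fun q => f q / c) (c⁻¹ • f') p := by
  simpa only [div_eq_mul_inv, mul_comm _ c⁻¹] using hf.const_mul c⁻¹

/-- The Jacobian of `(x, y) ↦ (c / x, -(x * y + a) * x / c)` is triangular with diagonal
entries `-c / x ^ 2` and `-x ^ 2 / c`, so it has determinant `1`. -/
theorem wedge_fderiv_pi2_pair (a : 𝕜) {c : 𝕜} (hc : c ≠ 0) (hf : HasFDerivAt f f' p)
    (hg : HasFDerivAt g g' p) (hp : f p ≠ 0) (u v : E) :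
    fderiv 𝕜 (fun q => c / f q) p u * fderiv 𝕜 (fun q => -(f q * g q + a) * f q / c) p v
      - fderiv 𝕜 (fun q => c / f q) p v * fderiv 𝕜 (fun q => -(f q * g q + a) * f q / c) p u
      = f' u * g' v - f' v * g' u := by
  have hY : HasFDerivAt (fun q => -(f q * g q + a) * f q / c) _ p :=
    (((hf.mul hg).add_const a).neg.mul hf).div_const c
  rw [(hf.const_div c hp).fderiv, hY.fderiv]
  simp only [smul_apply, add_apply, neg_apply, smul_eq_mul]
  field_simp
  ring

theorem pi2_pair_involutive {K : Type*} [Field K] (a y : K) {c x : K} (hc : c ≠ 0) (hx : x ≠ 0) :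
    c / (c / x) = x ∧ -(c / x * (-(x * y + a) * x / c) + a) * (c / x) / c = y := by
  refine ⟨div_div_cancel₀ hc, ?_⟩
  field_simp
  ring

theorem pi2_symplectic_and_involutive_general (α₀ α₂ t s : ℂ)
    (ht : t ≠ 0) (hs : s ≠ 0) (p : ℂ × ℂ × ℂ × ℂ)
    (hx : p.1 ≠ 0) (hz : p.2.2.1 ≠ 0) :
    (∀ u v : ℂ × ℂ × ℂ × ℂ,
      pullback (fun q => t / q.1)
        (fun q => -(q.1 * q.2.1 + α₀) * q.1 / t)
        (fun q => s / q.2.2.1)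
        (fun q => -(q.2.2.1 * q.2.2.2 + α₂) * q.2.2.1 / s) p u v = omega u v) ∧
    pi2 α₀ α₂ t s (pi2 α₀ α₂ t s p) = p := by
  refine ⟨fun u v => ?_, ?_⟩
  · simp only [pullback, Dv]
    rw [wedge_fderiv_pi2_pair α₀ ht (hasFDerivAt_fst (p := p)) hasFDerivAt_snd.fst hx,
      wedge_fderiv_pi2_pair α₂ hs (hasFDerivAt_snd.snd.fst (𝕜 := ℂ) (x := p))
        hasFDerivAt_snd.snd.snd hz]
    rfl
  · obtain ⟨hx₂, hy₂⟩ := pi2_pair_involutive α₀ p.2.1 ht hx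
    obtain ⟨hz₂, hw₂⟩ := pi2_pair_involutive α₂ p.2.2.2 hs hz
    simp only [pi2, hx₂, hy₂, hz₂, hw₂]

/-- π₂ is symplectic and an involution on the phase variables (with the parameter
change (α₁,α₃) ↦ (α₁+α₃-1/2, 1-α₃) on the remaining parameters). -/
theorem pi2_symplectic_and_involutive (α₀ α₁ α₂ α₃ t s : ℂ)
    (ht : t ≠ 0) (hs : s ≠ 0) (p : ℂ × ℂ × ℂ × ℂ)
    (hx : p.1 ≠ 0) (hz : p.2.2.1 ≠ 0) :
    (∀ u v : ℂ × ℂ × ℂ × ℂ,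
      pullback (fun q => t / q.1)
        (fun q => -(q.1 * q.2.1 + α₀) * q.1 / t)
        (fun q => s / q.2.2.1)
        (fun q => -(q.2.2.1 * q.2.2.2 + α₂) * q.2.2.1 / s) p u v = omega u v) ∧
    pi2 α₀ α₂ t s (pi2 α₀ α₂ t s p) = p :=
  pi2_symplectic_and_involutive_general α₀ α₂ t s ht hs p hx hz
end
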